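/- arXiv:math/0702375 — 5 statements merged into one kernel-verified Lean document; each statement's English description precedes it below -/
import Mathlib

section
/- Let k be a field and consider the polynomial ring k[x_1,...,x_n]. Define the k-algebra homomorphism σ*: k[x_1,...,x_n] → k[y_1,...,y_n] (the chart map of the blowing-up of the subspace {x_r = ... = x_n = 0} in the x_r-chart) by σ*(x_j) = y_j for j ≤ r and σ*(x_j) = y_r·y_j for j > r. Then for every polynomial f: (1) σ*(∂f/∂x_j) = ∂(σ*f)/∂y_j for j < r; (2) σ*(x_r·∂f/∂x_r) = y_r·∂(σ*f)/∂y_r − Σ_{j=r+1}^n y_j·∂(σ*f)/∂y_j; (3) σ*(x_j·∂f/∂x_j) = y_j·∂(σ*f)/∂y_j for j > r. -/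
open MvPolynomial

/-- The chart map of the blowing-up of `{x_r = ⋯ = x_n = 0}` in the `x_r`-chart:
`x_j ↦ y_j` for `j ≤ r`, `x_j ↦ y_r·y_j` for `j > r`. -/
noncomputable def sigmaStar (k : Type) [Field k] (n : ℕ) (r : Fin n) :
    MvPolynomial (Fin n) k →ₐ[k] MvPolynomial (Fin n) k :=
  aeval fun j => if j ≤ r then X j else X r * X j

/-!
Each identity reads `σ*(D f) = E (σ* f)` for derivations `D`, `E` built from `x_j ∂/∂x_j` and
`∂/∂x_j`. Both sides satisfy the Leibniz rule along `σ*`, so they agree for all `f` once they agree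
on the variables `x_i`, where it is a direct computation with `σ*(x_i) = y_i` (`i ≤ r`) and
`σ*(x_i) = y_r y_i` (`i > r`).
-/

namespace MvPolynomial

theorem algHom_derivation_eq_of_forall_X {R A τ : Type*} [CommSemiring R] [CommSemiring A]
    [Algebra R A]
    (φ : MvPolynomial τ R →ₐ[R] A) (D : Derivation R (MvPolynomial τ R) (MvPolynomial τ R))
    (E : Derivation R A A) (h : ∀ i, φ (D (X i)) = E (φ (X i))) (f : MvPolynomial τ R) :
    φ (D f) = E (φ f) := by
  induction f using MvPolynomial.induction_on with
  | C a => simp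
  | add p q hp hq => simp only [map_add, hp, hq]
  | mul_X p i hp => simp only [Derivation.leibniz, smul_eq_mul, map_add, map_mul, hp, h]

end MvPolynomial

theorem Derivation.finsetSum_apply {R A M ι : Type*} [CommSemiring R] [CommSemiring A]
    [Algebra R A] [AddCommMonoid M] [Module A M] [Module R M] (s : Finset ι)
    (D : ι → Derivation R A M) (a : A) :
    (∑ j ∈ s, D j) a = ∑ j ∈ s, D j a := by
  rw [← Finset.sum_apply]; exact congrFun (map_sum Derivation.coeFnAddMonoidHom D s) a

section
variable {k : Type} [Field k] {n : ℕ} {r : Fin n}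

theorem sigmaStar_X_of_le {i : Fin n} (hi : i ≤ r) : sigmaStar k n r (X i) = X i := by
  simp [sigmaStar, hi]

theorem sigmaStar_X_of_lt {i : Fin n} (hi : r < i) : sigmaStar k n r (X i) = X r * X i := by
  simp [sigmaStar, hi.not_ge]

theorem sigmaStar_pderiv_X_of_lt {j : Fin n} (hj : j < r) (i : Fin n) :
    sigmaStar k n r (pderiv j (X i)) = pderiv j (sigmaStar k n r (X i)) := by
  classical
  rcases le_or_gt i r with hi | hi
  · simp [sigmaStar_X_of_le hi, pderiv_X, Pi.single_apply]
  · simp [sigmaStar_X_of_lt hi, pderiv_X, hj.ne, (hj.trans hi).ne]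

theorem sigmaStar_X_mul_pderiv_X_of_lt {j : Fin n} (hj : r < j) (i : Fin n) :
    sigmaStar k n r (X j * pderiv j (X i)) = X j * pderiv j (sigmaStar k n r (X i)) := by
  rcases le_or_gt i r with hi | hi
  · simp [sigmaStar_X_of_le hi, pderiv_X_of_ne (hi.trans_lt hj).ne]
  obtain rfl | hij := eq_or_ne i j
  · simp [sigmaStar_X_of_lt hi, pderiv_X_of_ne hj.ne, mul_comm]
  · simp [sigmaStar_X_of_lt hi, pderiv_X_of_ne hj.ne, pderiv_X_of_ne hij]

theorem sigmaStar_X_mul_pderiv_X_self (i : Fin n) :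
    sigmaStar k n r (X r * pderiv r (X i)) =
      X r * pderiv r (sigmaStar k n r (X i)) -
        ∑ j ∈ Finset.univ.filter (fun j => r < j), X j * pderiv j (sigmaStar k n r (X i)) := by
  rcases le_or_gt i r with hi | hi
  · have hsum : ∑ j ∈ Finset.univ.filter (fun j => r < j), X j * pderiv j (X i) =
        (0 : MvPolynomial (Fin n) k) :=
      Finset.sum_eq_zero fun j hj => by
        simp [pderiv_X_of_ne (hi.trans_lt (Finset.mem_filter.1 hj).2).ne]
    rw [sigmaStar_X_of_le hi, hsum, sub_zero]
    obtain rfl | hir := eq_or_ne i r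
    · simp [sigmaStar_X_of_le hi]
    · simp [pderiv_X_of_ne hir]
  · have hsum : ∑ j ∈ Finset.univ.filter (fun j => r < j), X j * pderiv j (X r * X i) =
        (X i * X r : MvPolynomial (Fin n) k) := by
      rw [Finset.sum_eq_single_of_mem i (by simpa using hi)]
      · simp [pderiv_X_of_ne hi.ne]
      · intro j hj hji
        simp [pderiv_X_of_ne (Finset.mem_filter.1 hj).2.ne, pderiv_X_of_ne hji.symm]
    rw [sigmaStar_X_of_lt hi, hsum]
    simp [pderiv_X_of_ne hi.ne', mul_comm]

end

theorem blowup_chart_chain_rule (k : Type) [Field k] (n : ℕ) (r : Fin n)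
    (f : MvPolynomial (Fin n) k) :
    (∀ j : Fin n, j < r →
      sigmaStar k n r (pderiv j f) = pderiv j (sigmaStar k n r f)) ∧
    (sigmaStar k n r (X r * pderiv r f) =
      X r * pderiv r (sigmaStar k n r f) -
        ∑ j ∈ Finset.univ.filter (fun j => r < j),
          X j * pderiv j (sigmaStar k n r f)) ∧
    (∀ j : Fin n, r < j →
      sigmaStar k n r (X j * pderiv j f) = X j * pderiv j (sigmaStar k n r f)) := by
  let θ : Fin n → Derivation k (MvPolynomial (Fin n) k) (MvPolynomial (Fin n) k) :=
    fun j => (X j : MvPolynomial (Fin n) k) • pderiv j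
  have hθ : ∀ (j : Fin n) (g : MvPolynomial (Fin n) k), θ j g = X j * pderiv j g :=
    fun _ _ => rfl
  refine ⟨fun j hj => ?_, ?_, fun j hj => ?_⟩
  · exact algHom_derivation_eq_of_forall_X _ _ _ (sigmaStar_pderiv_X_of_lt hj) f
  · have hchain := algHom_derivation_eq_of_forall_X (sigmaStar k n r) (θ r)
      (θ r - ∑ j ∈ Finset.univ.filter (fun j => r < j), θ j)
      (by simpa only [Derivation.coe_sub, Derivation.finsetSum_apply, Pi.sub_apply, hθ]
        using sigmaStar_X_mul_pderiv_X_self) f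
    simpa only [Derivation.coe_sub, Derivation.finsetSum_apply, Pi.sub_apply, hθ] using hchain
  · simpa only [hθ] using algHom_derivation_eq_of_forall_X (sigmaStar k n r) (θ j) (θ j)
      (by simpa only [hθ] using sigmaStar_X_mul_pderiv_X_of_lt hj) f
end

section
/- Let k be a field of characteristic zero, R = k[x_1,...,x_n], I ⊆ R an ideal, and a ∈ k^n a point. Define ord_a(I) as the largest q ∈ ℕ such that I is contained in the q-th power of the maximal ideal m_a of a (with ord_a(I) = ∞ if I = 0). If I ≠ 0 and ord_a(I) ≥ 1, then ord_a(D(I)) = ord_a(I) − 1, where D(I) is the ideal generated by I and all first partial derivatives of its elements. -/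
open MvPolynomial

/-- The maximal ideal of the point `a ∈ kⁿ`: polynomials vanishing at `a`. -/
noncomputable def mIdeal {k : Type} [Field k] {n : ℕ} (a : Fin n → k) :
    Ideal (MvPolynomial (Fin n) k) :=
  RingHom.ker (eval a)

/-- The derivative ideal: the ideal generated by `I` together with all first
partial derivatives of elements of `I`. -/
noncomputable def derivIdeal {k : Type} [Field k] {n : ℕ}
    (I : Ideal (MvPolynomial (Fin n) k)) : Ideal (MvPolynomial (Fin n) k) :=
  I ⊔ Ideal.span {g | ∃ f ∈ I, ∃ j : Fin n, g = pderiv j f}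

namespace BMaux

variable {k : Type} [Field k] {n : ℕ}

/-- total degree of a monomial exponent -/
def deg {n : ℕ} (d : Fin n →₀ ℕ) : ℕ := ∑ j, d j

lemma deg_add {n : ℕ} (d e : Fin n →₀ ℕ) : deg (d + e) = deg d + deg e := by
  simp [deg, Finset.sum_add_distrib]

lemma deg_single {n : ℕ} (i : Fin n) : deg (Finsupp.single i 1) = 1 := by
  simp [deg, Finsupp.single_apply]

lemma le_deg {n : ℕ} (d : Fin n →₀ ℕ) (i : Fin n) : d i ≤ deg d :=
  Finset.single_le_sum (fun _ _ => Nat.zero_le _) (Finset.mem_univ i)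

lemma exists_pos_of_ne_zero {n : ℕ} {d : Fin n →₀ ℕ} (hd : d ≠ 0) :
    ∃ i, d i ≠ 0 := by
  by_contra h
  push_neg at h
  exact hd (Finsupp.ext fun i => h i)

lemma mem_m0_iff (f : MvPolynomial (Fin n) k) :
    f ∈ mIdeal (0 : Fin n → k) ↔ coeff 0 f = 0 := by
  show eval (0 : Fin n → k) f = 0 ↔ _
  rw [eval_zero, constantCoeff_eq]

lemma coeff_pderiv (j : Fin n) (t : Fin n →₀ ℕ) (f : MvPolynomial (Fin n) k) :
    coeff t (pderiv j f) = ((t j + 1 : ℕ) : k) * coeff (t + Finsupp.single j 1) f := by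
  induction f using MvPolynomial.induction_on' with
  | add p q hp hq => simp [hp, hq, mul_add]
  | monomial s a =>
    rw [pderiv_monomial, coeff_monomial, coeff_monomial]
    by_cases h' : s = t + Finsupp.single j 1
    · subst h'
      rw [if_pos (add_tsub_cancel_right _ _), if_pos rfl]
      simp [mul_comm]
    · rw [if_neg h']
      by_cases h : s - Finsupp.single j 1 = t
      · rw [if_pos h]
        have hsj : s j = 0 := by
          by_contra hsj
          exact h' (by
            rw [← h, tsub_add_cancel_of_le]
            exact Finsupp.single_le_iff.mpr (Nat.one_le_iff_ne_zero.mpr hsj))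
        simp [hsj]
      · rw [if_neg h]; ring

lemma mem_m0_pow_of_deg {q : ℕ} {f : MvPolynomial (Fin n) k}
    (h : ∀ d ∈ f.support, q ≤ deg d) : f ∈ (mIdeal (0 : Fin n → k)) ^ q := by
  have key : ∀ (q : ℕ) (d : Fin n →₀ ℕ) (c : k), q ≤ deg d →
      (monomial d c : MvPolynomial (Fin n) k) ∈ (mIdeal (0 : Fin n → k)) ^ q := by
    intro q
    induction q with
    | zero => intro d c _; simp
    | succ q ih =>
      intro d c hd
      have hd0 : d ≠ 0 := by
        rintro rfl
        simp [deg] at hd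
      obtain ⟨i, hi⟩ := exists_pos_of_ne_zero hd0
      have hle : Finsupp.single i 1 ≤ d :=
        Finsupp.single_le_iff.mpr (Nat.one_le_iff_ne_zero.mpr hi)
      have hdec : d - Finsupp.single i 1 + Finsupp.single i 1 = d := tsub_add_cancel_of_le hle
      have hdeg : q ≤ deg (d - Finsupp.single i 1) := by
        have hsum : deg (d - Finsupp.single i 1) + deg (Finsupp.single i 1) = deg d := by
          rw [← deg_add, hdec]
        rw [deg_single] at hsum
        omega
      have hX : (X i : MvPolynomial (Fin n) k) = monomial (Finsupp.single i 1) 1 := by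
        rw [← X_pow_eq_monomial, pow_one]
      have heq : (monomial d c : MvPolynomial (Fin n) k) =
          X i * monomial (d - Finsupp.single i 1) c := by
        rw [hX, monomial_mul, one_mul, add_comm (Finsupp.single i 1), hdec]
      rw [heq, pow_succ']
      refine Ideal.mul_mem_mul ?_ (ih _ _ hdeg)
      show eval (0 : Fin n → k) (X i) = 0
      simp
  rw [f.as_sum]
  exact Ideal.sum_mem _ fun d hd => key q d _ (h d hd)

lemma deg_of_mem_m0_pow : ∀ (q : ℕ) (f : MvPolynomial (Fin n) k),
    f ∈ (mIdeal (0 : Fin n → k)) ^ q → ∀ d ∈ f.support, q ≤ deg d := by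
  intro q
  induction q with
  | zero => intro f _ d _; exact Nat.zero_le _
  | succ q ih =>
    intro f hf
    rw [pow_succ] at hf
    refine Submodule.mul_induction_on hf ?_ ?_
    · intro g hg h hh d hd
      rw [MvPolynomial.mem_support_iff, coeff_mul] at hd
      obtain ⟨⟨d1, d2⟩, hmem, hne⟩ := Finset.exists_ne_zero_of_sum_ne_zero hd
      have hd1 : coeff d1 g ≠ 0 := fun h0 => hne (by simp [h0])
      have hd2 : coeff d2 h ≠ 0 := fun h0 => hne (by simp [h0])
      have hq1 : q ≤ deg d1 := ih g hg d1 (MvPolynomial.mem_support_iff.mpr hd1)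
      have hd20 : d2 ≠ 0 := by
        rintro rfl
        exact hd2 ((mem_m0_iff h).mp hh)
      obtain ⟨i, hi⟩ := exists_pos_of_ne_zero hd20
      have hge : 1 ≤ deg d2 := le_trans (Nat.one_le_iff_ne_zero.mpr hi) (le_deg d2 i)
      have hdd : d = d1 + d2 := (Finset.HasAntidiagonal.mem_antidiagonal.mp hmem).symm
      rw [hdd, deg_add]
      omega
    · intro g h hg hh d hd
      classical
      rcases Finset.mem_union.mp (MvPolynomial.support_add hd) with hmem | hmem
      · exact hg d hmem
      · exact hh d hmem

/-- char zero step at the origin -/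
lemma step_at_zero [CharZero k] {q : ℕ} (hq : 1 ≤ q) {f : MvPolynomial (Fin n) k}
    (hf : f ∈ (mIdeal (0 : Fin n → k)) ^ q)
    (hdf : ∀ j : Fin n, pderiv j f ∈ (mIdeal (0 : Fin n → k)) ^ q) :
    f ∈ (mIdeal (0 : Fin n → k)) ^ (q + 1) := by
  apply mem_m0_pow_of_deg
  intro d hd
  have h1 : q ≤ deg d := deg_of_mem_m0_pow q f hf d hd
  by_contra hlt
  have hdq : deg d = q := by omega
  have hd0 : d ≠ 0 := by
    rintro rfl
    simp [deg] at hdq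
    omega
  obtain ⟨j, hj⟩ := exists_pos_of_ne_zero hd0
  set t := d - Finsupp.single j 1 with ht
  have hle : Finsupp.single j 1 ≤ d :=
    Finsupp.single_le_iff.mpr (Nat.one_le_iff_ne_zero.mpr hj)
  have htd : t + Finsupp.single j 1 = d := tsub_add_cancel_of_le hle
  have hco : coeff t (pderiv j f) = ((t j + 1 : ℕ) : k) * coeff d f := by
    rw [coeff_pderiv, htd]
  have hcoeff : coeff t (pderiv j f) ≠ 0 := by
    rw [hco]
    exact mul_ne_zero (Nat.cast_ne_zero.mpr (Nat.succ_ne_zero _))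
      (MvPolynomial.mem_support_iff.mp hd)
  have hget := deg_of_mem_m0_pow q _ (hdf j) t (MvPolynomial.mem_support_iff.mpr hcoeff)
  have hdt : deg t + deg (Finsupp.single j 1) = deg d := by rw [← deg_add, htd]
  rw [deg_single] at hdt
  omega

/-- Translation ring equivalence sending `a` to `0`. -/
noncomputable def shift (a : Fin n → k) :
    MvPolynomial (Fin n) k ≃+* MvPolynomial (Fin n) k where
  toFun := aeval (fun i => X i + C (a i))
  invFun := aeval (fun i => X i - C (a i))
  left_inv f := by
    have h : (aeval (fun i => (X i : MvPolynomial (Fin n) k) - C (a i))).comp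
        (aeval (fun i => (X i : MvPolynomial (Fin n) k) + C (a i))) = AlgHom.id k _ := by
      apply MvPolynomial.algHom_ext
      intro i
      simp
    have h2 := congrArg (fun (g : MvPolynomial (Fin n) k →ₐ[k] MvPolynomial (Fin n) k) => g f) h
    simpa using h2
  right_inv f := by
    have h : (aeval (fun i => (X i : MvPolynomial (Fin n) k) + C (a i))).comp
        (aeval (fun i => (X i : MvPolynomial (Fin n) k) - C (a i))) = AlgHom.id k _ := by
      apply MvPolynomial.algHom_ext
      intro i
      simp
    have h2 := congrArg (fun (g : MvPolynomial (Fin n) k →ₐ[k] MvPolynomial (Fin n) k) => g f) h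
    simpa using h2
  map_mul' := map_mul _
  map_add' := map_add _

lemma eval_comp_shift (a : Fin n → k) :
    (eval (0 : Fin n → k)).comp ((shift a) : MvPolynomial (Fin n) k →+* MvPolynomial (Fin n) k)
      = eval a := by
  apply MvPolynomial.ringHom_ext
  · intro r
    simp [shift]
  · intro i
    simp [shift]

lemma comap_shift (a : Fin n → k) :
    Ideal.comap ((shift a) : MvPolynomial (Fin n) k →+* MvPolynomial (Fin n) k)
      (mIdeal (0 : Fin n → k)) = mIdeal a := by
  show Ideal.comap _ (RingHom.ker _) = RingHom.ker _
  rw [RingHom.comap_ker, eval_comp_shift]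

lemma map_shift (a : Fin n → k) :
    Ideal.map ((shift a) : MvPolynomial (Fin n) k →+* MvPolynomial (Fin n) k)
      (mIdeal a) = mIdeal (0 : Fin n → k) := by
  rw [← comap_shift a]
  exact Ideal.map_comap_of_surjective _ (shift a).surjective _

lemma mem_mIdeal_pow_iff (a : Fin n → k) (q : ℕ) (f : MvPolynomial (Fin n) k) :
    f ∈ (mIdeal a) ^ q ↔ (shift a) f ∈ (mIdeal (0 : Fin n → k)) ^ q := by
  have hmap : Ideal.map ((shift a) : MvPolynomial (Fin n) k →+* MvPolynomial (Fin n) k)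
      ((mIdeal a) ^ q) = (mIdeal (0 : Fin n → k)) ^ q := by
    rw [Ideal.map_pow, map_shift]
  rw [← hmap]
  constructor
  · intro h
    exact Ideal.mem_map_of_mem _ h
  · intro h
    rw [Ideal.mem_map_iff_of_surjective
        ((shift a) : MvPolynomial (Fin n) k →+* MvPolynomial (Fin n) k)
        (shift a).surjective] at h
    obtain ⟨x, hx, hxy⟩ := h
    rwa [← (shift a).injective hxy]

lemma pderiv_shift (a : Fin n → k) (j : Fin n) (f : MvPolynomial (Fin n) k) :
    pderiv j ((shift a) f) = (shift a) (pderiv j f) := by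
  show pderiv j (aeval (fun i => X i + C (a i)) f)
      = aeval (fun i => X i + C (a i)) (pderiv j f)
  induction f using MvPolynomial.induction_on with
  | C c => simp
  | add p r hp hr => simp only [map_add, hp, hr]
  | mul_X p i hp =>
    by_cases h : j = i
    · subst h
      have e1 : pderiv j ((aeval fun i => X i + C (a i)) (p * X j)) =
          pderiv j ((aeval fun i => X i + C (a i)) p) * (X j + C (a j)) +
          (aeval fun i => X i + C (a i)) p := by
        rw [map_mul, aeval_X, pderiv_mul]
        have h1 : pderiv j ((X j : MvPolynomial (Fin n) k) + C (a j)) = 1 := by simp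
        rw [h1, mul_one]
      have e2 : pderiv j (p * X j) = pderiv j p * X j + p := by
        rw [pderiv_mul, pderiv_X_self, mul_one]
      rw [e1, hp, e2, map_add, map_mul, aeval_X]
    · have h1 : pderiv j ((X i : MvPolynomial (Fin n) k) + C (a i)) = 0 := by
        simp [pderiv_X_of_ne (Ne.symm h)]
      have h2 : pderiv j (X i : MvPolynomial (Fin n) k) = 0 := pderiv_X_of_ne (Ne.symm h)
      rw [map_mul, aeval_X, pderiv_mul, h1, mul_zero, add_zero, pderiv_mul, h2, mul_zero,
        add_zero, map_mul, hp, aeval_X]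

/-- derivative drops order by at most one (at any point). -/
lemma pderiv_mem_pow (a : Fin n → k) (j : Fin n) :
    ∀ (r : ℕ) (f : MvPolynomial (Fin n) k), f ∈ (mIdeal a) ^ (r + 1) →
      pderiv j f ∈ (mIdeal a) ^ r := by
  intro r
  induction r with
  | zero => intro f _; simp
  | succ r ih =>
    intro f hf
    rw [pow_succ] at hf
    refine Submodule.mul_induction_on hf ?_ ?_
    · intro g hg h hh
      rw [pderiv_mul]
      refine Ideal.add_mem _ ?_ ?_
      · rw [pow_succ]
        exact Ideal.mul_mem_mul (ih g hg) hh
      · exact Ideal.mul_mem_right _ _ hg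
    · intro g h hg hh
      rw [map_add]
      exact Ideal.add_mem _ hg hh

/-- char zero step at a general point. -/
lemma step_at_a [CharZero k] (a : Fin n → k) {q : ℕ} (hq : 1 ≤ q)
    {f : MvPolynomial (Fin n) k} (hf : f ∈ (mIdeal a) ^ q)
    (hdf : ∀ j : Fin n, pderiv j f ∈ (mIdeal a) ^ q) :
    f ∈ (mIdeal a) ^ (q + 1) := by
  rw [mem_mIdeal_pow_iff]
  apply step_at_zero hq
  · rw [← mem_mIdeal_pow_iff]; exact hf
  · intro j
    rw [pderiv_shift, ← mem_mIdeal_pow_iff]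
    exact hdf j

end BMaux

/-- If `I ≠ 0` and `ord_a(I) = q ≥ 1` (i.e. `I ⊆ m_a^q` but `I ⊄ m_a^{q+1}`),
then `ord_a(D(I)) = q − 1`. -/
theorem ord_derivIdeal (k : Type) [Field k] [CharZero k] (n : ℕ)
    (I : Ideal (MvPolynomial (Fin n) k)) (hI : I ≠ 0) (a : Fin n → k) (q : ℕ)
    (hq : 1 ≤ q) (h1 : I ≤ (mIdeal a) ^ q) (h2 : ¬ I ≤ (mIdeal a) ^ (q + 1)) :
    derivIdeal I ≤ (mIdeal a) ^ (q - 1) ∧ ¬ derivIdeal I ≤ (mIdeal a) ^ q := by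
  constructor
  · rw [derivIdeal, sup_le_iff]
    constructor
    · exact le_trans h1 (Ideal.pow_le_pow_right (by omega))
    · rw [Ideal.span_le]
      rintro _ ⟨f, hf, j, rfl⟩
      obtain ⟨r, rfl⟩ : ∃ r, q = r + 1 := ⟨q - 1, by omega⟩
      have hr : (r + 1 - 1) = r := by omega
      rw [hr]
      exact BMaux.pderiv_mem_pow a j r f (h1 hf)
  · intro hD
    apply h2
    intro f hf
    apply BMaux.step_at_a a hq (h1 hf)
    intro j
    apply hD
    rw [derivIdeal]
    exact Submodule.mem_sup_right (Ideal.subset_span ⟨f, hf, j, rfl⟩)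
end

section
/- Let μ ≥ 1 be a rational number and define S(μ) = {(j,i) ∈ ℕ_{≥1} × ℕ : j(μ−1) − i ≥ 1}. Then: (1) S(μ) = ∅ if and only if μ = 1; (2) if μ > 1, then μ = 1 + sup_{(j,i) ∈ S(μ)} (i+1)/j; consequently, if μ, μ' ≥ 1 and S(μ) = S(μ'), then μ = μ'. -/
/-!
A pair `(j, i)` with `j ≥ 1` lies in `S(μ)` exactly when `(i + 1) / j ≤ μ - 1`, and every positive
rational is of the form `(i + 1) / j`. Hence for `μ > 1` the ratio `μ - 1` itself is attained,
so it is the greatest ratio, and `S` grows strictly with `μ` on `[1, ∞)`.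
-/

/-- Hironaka's set `S(μ) = {(j,i) ∈ ℕ_{≥1} × ℕ : j(μ−1) − i ≥ 1}`. -/
def hironakaS (μ : ℚ) : Set (ℕ × ℕ) :=
  {p | 1 ≤ p.1 ∧ 1 ≤ (p.1 : ℚ) * (μ - 1) - (p.2 : ℚ)}

theorem mem_hironakaS_iff {μ : ℚ} {p : ℕ × ℕ} :
    p ∈ hironakaS μ ↔ 1 ≤ p.1 ∧ ((p.2 : ℚ) + 1) / p.1 ≤ μ - 1 := by
  refine and_congr_right fun hj => ?_
  rw [div_le_iff₀ (by exact_mod_cast hj)]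
  constructor <;> intro h <;> linarith

theorem Rat.exists_nat_succ_div_eq {q : ℚ} (hq : 0 < q) :
    ∃ j i : ℕ, 1 ≤ j ∧ q = ((i : ℚ) + 1) / j := by
  obtain ⟨i, hi⟩ := Int.eq_succ_of_zero_lt (Rat.num_pos.mpr hq)
  refine ⟨q.den, i, q.den_pos, ?_⟩
  conv_lhs => rw [← Rat.num_div_den q, hi]
  push_cast
  rfl

theorem exists_mem_hironakaS_div_eq {μ : ℚ} (hμ : 1 < μ) :
    ∃ p ∈ hironakaS μ, ((p.2 : ℚ) + 1) / p.1 = μ - 1 := by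
  obtain ⟨j, i, hj, hq⟩ := Rat.exists_nat_succ_div_eq (sub_pos.mpr hμ)
  exact ⟨(j, i), mem_hironakaS_iff.mpr ⟨hj, hq.ge⟩, hq.symm⟩

theorem hironakaS_eq_empty_iff {μ : ℚ} : hironakaS μ = ∅ ↔ μ ≤ 1 := by
  refine ⟨fun h => not_lt.mp fun hμ => ?_, fun hμ => Set.eq_empty_of_forall_notMem fun p hp => ?_⟩
  · obtain ⟨p, hp, -⟩ := exists_mem_hironakaS_div_eq hμ
    exact h.subset hp
  · obtain ⟨hj, hle⟩ := mem_hironakaS_iff.mp hp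
    have : 0 < ((p.2 : ℚ) + 1) / p.1 := by positivity
    linarith

theorem isGreatest_hironakaS {μ : ℚ} (hμ : 1 < μ) :
    IsGreatest {x : ℚ | ∃ p ∈ hironakaS μ, x = ((p.2 : ℚ) + 1) / (p.1 : ℚ)} (μ - 1) := by
  obtain ⟨p, hp, hpμ⟩ := exists_mem_hironakaS_div_eq hμ
  refine ⟨⟨p, hp, hpμ.symm⟩, ?_⟩
  rintro x ⟨q, hq, rfl⟩
  exact (mem_hironakaS_iff.mp hq).2

theorem hironakaS_monotone : Monotone hironakaS := fun _ _ hμ _ hp =>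
  mem_hironakaS_iff.mpr ⟨(mem_hironakaS_iff.mp hp).1, (mem_hironakaS_iff.mp hp).2.trans (by linarith)⟩

theorem hironakaS_strictMonoOn : StrictMonoOn hironakaS (Set.Ici 1) := by
  intro μ hμ μ' _ hlt
  refine (hironakaS_monotone hlt.le).lt_of_not_ge fun hsub => ?_
  obtain ⟨p, hp, hpμ'⟩ := exists_mem_hironakaS_div_eq (lt_of_le_of_lt hμ hlt)
  have := (mem_hironakaS_iff.mp (hsub hp)).2
  linarith

theorem hironakaS_determines_mu (μ μ' : ℚ) (hμ : 1 ≤ μ) (hμ' : 1 ≤ μ') :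
    (hironakaS μ = ∅ ↔ μ = 1) ∧
    (1 < μ →
      IsGreatest {x : ℚ | ∃ p ∈ hironakaS μ, x = ((p.2 : ℚ) + 1) / (p.1 : ℚ)}
        (μ - 1)) ∧
    (hironakaS μ = hironakaS μ' → μ = μ') := by
  refine ⟨?_, isGreatest_hironakaS, fun hS => hironakaS_strictMonoOn.injOn hμ hμ' hS⟩
  rw [hironakaS_eq_empty_iff]
  exact ⟨fun h => le_antisymm h hμ, le_of_eq⟩
end

section
/- Let I be the ideal of k[x,y,z,w] generated by y² − x³ and x⁴ + xz² − w³, over a field k of characteristic zero. Then ord_0(I) = 2, and for every point a ≠ 0 of affine 4-space, ord_a(I) ≤ 1. (I.e., the maximum order 2 of I is attained precisely at the origin.) -/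
/-!
A derivation maps `I ^ (n + 1)` into `I ^ n`, so a polynomial in `m_a ^ 2` has all first
partial derivatives vanishing at `a`, and one in `m_a ^ 3` all second ones. Both generators lie
in `m_0 ^ 2`, while `∂²/∂y² (y² − x³) = 2 ≠ 0`. At a point `a` with `I ≤ m_a ^ 2` the partials
`−3x²`, `2y` of the first generator and `4x³ + z²`, `−3w²` of the second vanish, which forces
`a = 0`.
-/

open MvPolynomial

theorem Derivation.apply_mem_pow_of_mem_pow_succ {R A : Type*} [CommSemiring R] [CommRing A]
    [Algebra R A] (D : Derivation R A A) {I : Ideal A} :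
    ∀ {n : ℕ} {x : A}, x ∈ I ^ (n + 1) → D x ∈ I ^ n
  | 0, _, _ => by simp
  | n + 1, x, hx => by
    rw [pow_succ] at hx
    refine Submodule.mul_induction_on hx (fun g hg h hh => ?_) (fun x y hx hy => ?_)
    · rw [Derivation.leibniz, smul_eq_mul, smul_eq_mul]
      exact add_mem (Ideal.mul_mem_right _ _ hg)
        (pow_succ' I n ▸ Ideal.mul_mem_mul hh (apply_mem_pow_of_mem_pow_succ D hg))
    · rw [map_add]
      exact add_mem hx hy

section mIdeal

variable {k : Type} [Field k] {n : ℕ}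

theorem mem_mIdeal {a : Fin n → k} {f : MvPolynomial (Fin n) k} :
    f ∈ mIdeal a ↔ eval a f = 0 :=
  RingHom.mem_ker

theorem X_pow_mem_mIdeal_zero_pow (i : Fin n) {p q : ℕ} (hpq : p ≤ q) :
    (X i : MvPolynomial (Fin n) k) ^ q ∈ mIdeal 0 ^ p :=
  Ideal.pow_le_pow_right hpq (Ideal.pow_mem_pow (mem_mIdeal.mpr (by simp)) q)

theorem eval_pderiv_eq_zero_of_mem_mIdeal_sq {a : Fin n → k} {f : MvPolynomial (Fin n) k}
    (hf : f ∈ mIdeal a ^ 2) (i : Fin n) : eval a (pderiv i f) = 0 := by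
  have : pderiv i f ∈ mIdeal a ^ 1 := (pderiv i).apply_mem_pow_of_mem_pow_succ hf
  rwa [pow_one, mem_mIdeal] at this

theorem eval_pderiv_pderiv_eq_zero_of_mem_mIdeal_pow_three {a : Fin n → k}
    {f : MvPolynomial (Fin n) k} (hf : f ∈ mIdeal a ^ 3) (i j : Fin n) :
    eval a (pderiv i (pderiv j f)) = 0 := by
  have : pderiv j f ∈ mIdeal a ^ 2 := (pderiv j).apply_mem_pow_of_mem_pow_succ hf
  exact eval_pderiv_eq_zero_of_mem_mIdeal_sq this i

end mIdeal

theorem eq_zero_of_mem_mIdeal_sq_of_mem_mIdeal_sq {k : Type} [Field k] [CharZero k]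
    {a : Fin 4 → k} (h₁ : X 1 ^ 2 - X 0 ^ 3 ∈ mIdeal a ^ 2)
    (h₂ : X 0 ^ 4 + X 0 * X 2 ^ 2 - X 3 ^ 3 ∈ mIdeal a ^ 2) : a = 0 := by
  have hx := eval_pderiv_eq_zero_of_mem_mIdeal_sq h₁ 0
  have hy := eval_pderiv_eq_zero_of_mem_mIdeal_sq h₁ 1
  have hz := eval_pderiv_eq_zero_of_mem_mIdeal_sq h₂ 0
  have hw := eval_pderiv_eq_zero_of_mem_mIdeal_sq h₂ 3
  simp [pderiv_X] at hx hy hz hw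
  replace hz : a 2 = 0 := by simpa [hx] using hz
  funext i
  fin_cases i <;> assumption

/-- For `I = (y² − x³, x⁴ + xz² − w³)` (variables `x = X 0`, `y = X 1`, `z = X 2`,
`w = X 3`): `ord_0(I) = 2` and `ord_a(I) ≤ 1` for all `a ≠ 0`. -/
theorem example_ord_two_only_at_origin (k : Type) [Field k] [CharZero k] :
    let I : Ideal (MvPolynomial (Fin 4) k) :=
      Ideal.span {X 1 ^ 2 - X 0 ^ 3, X 0 ^ 4 + X 0 * X 2 ^ 2 - X 3 ^ 3}
    (I ≤ (mIdeal (0 : Fin 4 → k)) ^ 2 ∧ ¬ I ≤ (mIdeal (0 : Fin 4 → k)) ^ 3) ∧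
    ∀ a : Fin 4 → k, a ≠ 0 → ¬ I ≤ (mIdeal a) ^ 2 := by
  intro I
  have h₁ : (X 1 ^ 2 - X 0 ^ 3 : MvPolynomial (Fin 4) k) ∈ I := Ideal.subset_span (by simp)
  have h₂ : (X 0 ^ 4 + X 0 * X 2 ^ 2 - X 3 ^ 3 : MvPolynomial (Fin 4) k) ∈ I :=
    Ideal.subset_span (by simp)
  refine ⟨⟨?_, fun h => ?_⟩, fun a ha h => ?_⟩
  · rw [Ideal.span_le, Set.pair_subset_iff]
    constructor
    · exact sub_mem (X_pow_mem_mIdeal_zero_pow 1 le_rfl) (X_pow_mem_mIdeal_zero_pow 0 (by norm_num))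
    · exact sub_mem (add_mem (X_pow_mem_mIdeal_zero_pow 0 (by norm_num))
        (Ideal.mul_mem_left _ _ (X_pow_mem_mIdeal_zero_pow 2 le_rfl)))
        (X_pow_mem_mIdeal_zero_pow 3 (by norm_num))
  · have hyy := eval_pderiv_pderiv_eq_zero_of_mem_mIdeal_pow_three (h h₁) 1 1
    simp [pderiv_X, map_ofNat] at hyy
  · exact ha (eq_zero_of_mem_mIdeal_sq_of_mem_mIdeal_sq (h h₁) (h h₂))
end

section
/- Let k be an algebraically closed field of characteristic zero. Let X₁ ⊆ 𝔸⁴ be the variety defined by the ideal (x − y², y² + z² − w³), and let C₁ = {x = y = 0}. Then C₁ ∩ X₁ = {(0,0,z,w) : z² = w³}, which is a singular curve (singular at the origin); in particular C₁ ∩ X₁ is not smooth. Moreover, the singular locus of X₁ is exactly the origin. -/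
/-!
On `X₁` we have `x = y²`, so on `C₁ = {x = y = 0}` the second equation becomes `z² = w³`: the
intersection is the cuspidal plane curve, singular at the origin because its equation has no terms
of degree `< 2`. For `Sing X₁`, the first equation has `∂/∂x = 1` while the second does not involve
`x`, so the Jacobian of the pair drops rank exactly where the gradient `(0, 2y, 2z, -3w²)` of the
second equation vanishes; in characteristic zero this forces `y = z = w = 0`, and then `x = y² = 0`.
-/

open MvPolynomial

section

variable {σ R : Type*} [CommRing R]

theorem jacobian_minors_eq_zero_iff_eval_pderiv_eq_zero {f g : MvPolynomial σ R} {a : σ → R}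
    {i : σ} (hf : eval a (pderiv i f) = 1) (hg : eval a (pderiv i g) = 0) :
    (∀ l l' : σ, eval a (pderiv l f) * eval a (pderiv l' g)
        - eval a (pderiv l' f) * eval a (pderiv l g) = 0) ↔
      ∀ l, eval a (pderiv l g) = 0 := by
  constructor
  · intro hminor l
    simpa [hf, hg] using hminor i l
  · intro hgrad l l'
    simp [hgrad]

theorem eval_zero_pderiv_X_pow (i j : σ) {n : ℕ} (hn : 2 ≤ n) :
    eval 0 (pderiv i (X j ^ n : MvPolynomial σ R)) = 0 := by
  obtain ⟨m, rfl⟩ := Nat.exists_eq_add_of_le' hn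
  simp [Derivation.leibniz_pow]

end

theorem eval_pderiv_sq_add_sq_sub_cube_eq_zero_iff {R : Type*} [CommRing R] [NoZeroDivisors R]
    [CharZero R] (a : Fin 4 → R) :
    (∀ l, eval a (pderiv l (X 1 ^ 2 + X 2 ^ 2 - X 3 ^ 3 : MvPolynomial (Fin 4) R)) = 0) ↔
      a 1 = 0 ∧ a 2 = 0 ∧ a 3 = 0 := by
  simp [Fin.forall_fin_succ, Derivation.leibniz_pow, pderiv_X]

theorem example_nonsmooth_centre_intersection_general (k : Type) [Field k] [CharZero k] :
    let g₁ : MvPolynomial (Fin 4) k := X 0 - X 1 ^ 2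
    let g₂ : MvPolynomial (Fin 4) k := X 1 ^ 2 + X 2 ^ 2 - X 3 ^ 3
    let X₁ : Set (Fin 4 → k) := {a | eval a g₁ = 0 ∧ eval a g₂ = 0}
    -- C₁ ∩ X₁ = {(0,0,z,w) : z² = w³}
    ({a | a 0 = 0 ∧ a 1 = 0} ∩ X₁
        = {a | a 0 = 0 ∧ a 1 = 0 ∧ (a 2) ^ 2 = (a 3) ^ 3}) ∧
    -- the curve z² = w³ is singular at the origin: the defining polynomial and
    -- all its partial derivatives vanish there, and 0 ∈ C₁ ∩ X₁
    ((0 : Fin 4 → k) ∈ {a | a 0 = 0 ∧ a 1 = 0} ∩ X₁ ∧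
      eval (0 : Fin 4 → k) (X 2 ^ 2 - X 3 ^ 3 : MvPolynomial (Fin 4) k) = 0 ∧
      ∀ i : Fin 4,
        eval (0 : Fin 4 → k) (pderiv i (X 2 ^ 2 - X 3 ^ 3 : MvPolynomial (Fin 4) k))
          = 0) ∧
    -- Sing X₁ = {0}: the points of X₁ where the Jacobian of (g₁, g₂) has rank < 2
    ({a ∈ X₁ | ∀ l l' : Fin 4,
        eval a (pderiv l g₁) * eval a (pderiv l' g₂)
          - eval a (pderiv l' g₁) * eval a (pderiv l g₂) = 0}
      = {0}) := by
  intro g₁ g₂ X₁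
  have hminors (a : Fin 4 → k) := jacobian_minors_eq_zero_iff_eval_pderiv_eq_zero
    (f := g₁) (g := g₂) (a := a) (i := 0) (by simp [g₁, pderiv_X]) (by simp [g₂, pderiv_X])
  refine ⟨?_, ⟨by simp [X₁, g₁, g₂], by simp, fun i => ?_⟩, ?_⟩
  · ext a
    simp only [Set.mem_inter_iff, Set.mem_ofPred_eq, X₁, g₁, g₂, map_sub, map_add, map_pow, eval_X]
    constructor
    · rintro ⟨⟨h0, h1⟩, -, hcusp⟩
      exact ⟨h0, h1, by linear_combination hcusp - a 1 * h1⟩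
    · rintro ⟨h0, h1, hcusp⟩
      exact ⟨⟨h0, h1⟩, by linear_combination h0 - a 1 * h1, by linear_combination a 1 * h1 + hcusp⟩
  · rw [map_sub, map_sub, eval_zero_pderiv_X_pow i 2 le_rfl,
      eval_zero_pderiv_X_pow i 3 (by norm_num), sub_zero]
  · ext a
    simp only [Set.mem_ofPred_eq, Set.mem_singleton_iff, hminors,
      eval_pderiv_sq_add_sq_sub_cube_eq_zero_iff, g₂]
    constructor
    · rintro ⟨⟨hx, -⟩, hy, hz, hw⟩
      have hx : a 0 = 0 := by simpa [g₁, hy] using hx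
      ext i
      fin_cases i <;> assumption
    · rintro rfl
      simp [X₁, g₁, g₂]

/-- Example 8.2 of Bierstone–Milman: for `X₁ = V(x − y², y² + z² − w³) ⊆ 𝔸⁴`
and `C₁ = {x = y = 0}`: `C₁ ∩ X₁ = {(0,0,z,w) : z² = w³}` is a curve singular
at the origin (so `C₁ ∩ X₁` is not smooth), and `Sing X₁ = {0}` (expressed via
the rank of the Jacobian matrix of the two defining equations). -/
theorem example_nonsmooth_centre_intersection (k : Type) [Field k] [CharZero k]
    [IsAlgClosed k] :
    let g₁ : MvPolynomial (Fin 4) k := X 0 - X 1 ^ 2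
    let g₂ : MvPolynomial (Fin 4) k := X 1 ^ 2 + X 2 ^ 2 - X 3 ^ 3
    let X₁ : Set (Fin 4 → k) := {a | eval a g₁ = 0 ∧ eval a g₂ = 0}
    -- C₁ ∩ X₁ = {(0,0,z,w) : z² = w³}
    ({a | a 0 = 0 ∧ a 1 = 0} ∩ X₁
        = {a | a 0 = 0 ∧ a 1 = 0 ∧ (a 2) ^ 2 = (a 3) ^ 3}) ∧
    -- the curve z² = w³ is singular at the origin: the defining polynomial and
    -- all its partial derivatives vanish there, and 0 ∈ C₁ ∩ X₁
    ((0 : Fin 4 → k) ∈ {a | a 0 = 0 ∧ a 1 = 0} ∩ X₁ ∧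
      eval (0 : Fin 4 → k) (X 2 ^ 2 - X 3 ^ 3 : MvPolynomial (Fin 4) k) = 0 ∧
      ∀ i : Fin 4,
        eval (0 : Fin 4 → k) (pderiv i (X 2 ^ 2 - X 3 ^ 3 : MvPolynomial (Fin 4) k))
          = 0) ∧
    -- Sing X₁ = {0}: the points of X₁ where the Jacobian of (g₁, g₂) has rank < 2
    ({a ∈ X₁ | ∀ l l' : Fin 4,
        eval a (pderiv l g₁) * eval a (pderiv l' g₂)
          - eval a (pderiv l' g₁) * eval a (pderiv l g₂) = 0}
      = {0}) :=
  example_nonsmooth_centre_intersection_general k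
end
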